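/- arXiv:math/0502312 — 4 statements merged into one kernel-verified Lean document; each statement's English description precedes it below -/
import Mathlib

section
/- Let (Ω,σ) be a finite measure space, let H' be a finite-dimensional vector space of real-valued square-integrable functions on Ω, and let H be the linear span of all products φ₁·φ₂ with φ₁, φ₂ ∈ H'. Let X ⊆ Ω be a finite subset and W : X → ℝ a function with W(x) > 0 for all x ∈ X. Then (X,W) is a cubature formula for H if and only if the restriction map ρ : H' → ℓ²(X,W), φ ↦ φ|_X, preserves inner products, i.e. ∑_{x∈X} W(x)φ₁(x)φ₂(x) = ∫_Ω φ₁φ₂ dσ for all φ₁,φ₂ ∈ H'. In particular, if (X,W) is a cubature formula for H and the L²(σ) inner product is positive definite on H' (no nonzero element of H' vanishes σ-almost everywhere), then |X| ≥ dim_ℝ H'. -/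
open MeasureTheory Finset

/-!
The functionals `φ ↦ ∑ x ∈ X, W x * φ x` and `φ ↦ ∫ φ dσ` are linear on integrable functions, so
they agree on `H` as soon as they agree on the products `φ₁ * φ₂` spanning it, and the latter is
the isometry condition. If the restriction of some `φ ∈ H'` to `X` vanishes, the isometry gives
`∫ φ² dσ = 0`, so `φ = 0` by positive definiteness: restriction embeds `H'` into `ℝ^X`.
-/

namespace MeasureTheory

variable {Ω : Type*} [MeasurableSpace Ω] (σ : Measure Ω) (X : Finset Ω) (W : Ω → ℝ)

def cubatureExactSubmodule : Submodule ℝ (Ω → ℝ) where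
  carrier := {φ | Integrable φ σ ∧ ∑ x ∈ X, W x * φ x = ∫ ω, φ ω ∂σ}
  zero_mem' := ⟨integrable_zero _ _ _, by simp⟩
  add_mem' := by
    rintro φ ψ ⟨hφ, hφX⟩ ⟨hψ, hψX⟩
    refine ⟨hφ.add hψ, ?_⟩
    simp only [Pi.add_apply, mul_add, sum_add_distrib, integral_add hφ hψ, hφX, hψX]
  smul_mem' := by
    rintro c φ ⟨hφ, hφX⟩
    refine ⟨hφ.smul c, ?_⟩
    simp only [Pi.smul_apply, smul_eq_mul, integral_const_mul, ← hφX, mul_sum, mul_left_comm]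

variable {σ X W}

theorem sum_mul_eq_integral_of_mem_span {S : Set (Ω → ℝ)}
    (hS : ∀ φ ∈ S, Integrable φ σ ∧ ∑ x ∈ X, W x * φ x = ∫ ω, φ ω ∂σ)
    {φ : Ω → ℝ} (hφ : φ ∈ Submodule.span ℝ S) :
    ∑ x ∈ X, W x * φ x = ∫ ω, φ ω ∂σ :=
  (Submodule.span_le (p := cubatureExactSubmodule σ X W)).2 hS hφ |>.2

theorem cubature_span_mul_iff {S : Set (Ω → ℝ)} (hL2 : ∀ φ ∈ S, MemLp φ 2 σ) :
    (∀ φ ∈ Submodule.span ℝ {f | ∃ φ₁ ∈ S, ∃ φ₂ ∈ S, f = φ₁ * φ₂},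
        ∑ x ∈ X, W x * φ x = ∫ ω, φ ω ∂σ) ↔
      ∀ φ₁ ∈ S, ∀ φ₂ ∈ S, ∑ x ∈ X, W x * (φ₁ x * φ₂ x) = ∫ ω, φ₁ ω * φ₂ ω ∂σ := by
  refine ⟨fun hcub φ₁ h₁ φ₂ h₂ ↦ hcub _ (Submodule.subset_span ⟨φ₁, h₁, φ₂, h₂, rfl⟩),
    fun hiso φ hφ ↦ sum_mul_eq_integral_of_mem_span ?_ hφ⟩
  rintro _ ⟨φ₁, h₁, φ₂, h₂, rfl⟩
  exact ⟨(hL2 φ₁ h₁).integrable_mul (hL2 φ₂ h₂), hiso φ₁ h₁ φ₂ h₂⟩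

theorem ae_eq_zero_of_integral_mul_self_eq_zero {φ : Ω → ℝ} (hφ : MemLp φ 2 σ)
    (h : ∫ ω, φ ω * φ ω ∂σ = 0) : ∀ᵐ ω ∂σ, φ ω = 0 := by
  have hsq : (fun ω ↦ φ ω * φ ω) =ᵐ[σ] 0 :=
    (integral_eq_zero_iff_of_nonneg (fun ω ↦ mul_self_nonneg (φ ω))
      (hφ.integrable_mul hφ)).1 h
  filter_upwards [hsq] with ω hω using mul_self_eq_zero.1 hω

theorem injective_restrict_of_sum_mul_eq_integral {H' : Submodule ℝ (Ω → ℝ)}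
    (hL2 : ∀ φ ∈ H', MemLp φ 2 σ)
    (hiso : ∀ φ₁ ∈ H', ∀ φ₂ ∈ H', ∑ x ∈ X, W x * (φ₁ x * φ₂ x) = ∫ ω, φ₁ ω * φ₂ ω ∂σ)
    (hpos : ∀ φ ∈ H', (∀ᵐ ω ∂σ, φ ω = 0) → φ = 0) :
    Function.Injective (LinearMap.funLeft ℝ ℝ ((↑) : X → Ω) ∘ₗ H'.subtype) := by
  rw [← LinearMap.ker_eq_bot, LinearMap.ker_eq_bot']
  intro ⟨φ, hφ⟩ hφX
  have hzero : ∀ x ∈ X, φ x = 0 := fun x hx ↦ congrFun hφX ⟨x, hx⟩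
  have hint : ∫ ω, φ ω * φ ω ∂σ = 0 := by
    rw [← hiso φ hφ φ hφ]
    exact sum_eq_zero fun x hx ↦ by rw [hzero x hx, mul_zero, mul_zero]
  exact Subtype.ext (hpos φ hφ (ae_eq_zero_of_integral_mul_self_eq_zero (hL2 φ hφ) hint))

theorem finrank_le_card_of_sum_mul_eq_integral {H' : Submodule ℝ (Ω → ℝ)}
    (hL2 : ∀ φ ∈ H', MemLp φ 2 σ)
    (hiso : ∀ φ₁ ∈ H', ∀ φ₂ ∈ H', ∑ x ∈ X, W x * (φ₁ x * φ₂ x) = ∫ ω, φ₁ ω * φ₂ ω ∂σ)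
    (hpos : ∀ φ ∈ H', (∀ᵐ ω ∂σ, φ ω = 0) → φ = 0) :
    Module.finrank ℝ H' ≤ X.card := by
  simpa only [Module.finrank_pi, Fintype.card_coe] using
    LinearMap.finrank_le_finrank_of_injective
      (injective_restrict_of_sum_mul_eq_integral hL2 hiso hpos)

end MeasureTheory

theorem cubature_iff_isometry_and_card_lower_bound_general
    {Ω : Type*} [MeasurableSpace Ω] (σ : Measure Ω)
    (H' H : Submodule ℝ (Ω → ℝ))
    (hL2 : ∀ φ ∈ H', MemLp φ 2 σ)
    (hH : H = Submodule.span ℝ {f : Ω → ℝ | ∃ φ₁ ∈ H', ∃ φ₂ ∈ H', f = φ₁ * φ₂})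
    (X : Finset Ω) (W : Ω → ℝ) :
    ((∀ φ ∈ H, ∑ x ∈ X, W x * φ x = ∫ ω, φ ω ∂σ) ↔
      (∀ φ₁ ∈ H', ∀ φ₂ ∈ H',
        ∑ x ∈ X, W x * (φ₁ x * φ₂ x) = ∫ ω, φ₁ ω * φ₂ ω ∂σ)) ∧
    ((∀ φ ∈ H, ∑ x ∈ X, W x * φ x = ∫ ω, φ ω ∂σ) →
      (∀ φ ∈ H', (∀ᵐ ω ∂σ, φ ω = 0) → φ = 0) →
      Module.finrank ℝ H' ≤ X.card) := by
  subst hH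
  have hcub_iff := cubature_span_mul_iff (X := X) (W := W) hL2
  exact ⟨hcub_iff, fun hcub hpos ↦
    finrank_le_card_of_sum_mul_eq_integral hL2 (hcub_iff.1 hcub) hpos⟩

/-- a pair `(X,W)` is a cubature formula for the span `H` of products of
elements of `H'` iff the restriction map `H' → ℓ²(X,W)` preserves inner products;
and in that case, if the `L²(σ)` inner product is positive definite on `H'`,
then `|X| ≥ dim H'`. -/
theorem cubature_iff_isometry_and_card_lower_bound
    {Ω : Type*} [MeasurableSpace Ω] (σ : Measure Ω) [IsFiniteMeasure σ]
    (H' H : Submodule ℝ (Ω → ℝ)) [FiniteDimensional ℝ H']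
    (hL2 : ∀ φ ∈ H', MemLp φ 2 σ)
    (hH : H = Submodule.span ℝ {f : Ω → ℝ | ∃ φ₁ ∈ H', ∃ φ₂ ∈ H', f = φ₁ * φ₂})
    (X : Finset Ω) (W : Ω → ℝ) (hW : ∀ x ∈ X, 0 < W x) :
    ((∀ φ ∈ H, ∑ x ∈ X, W x * φ x = ∫ ω, φ ω ∂σ) ↔
      (∀ φ₁ ∈ H', ∀ φ₂ ∈ H',
        ∑ x ∈ X, W x * (φ₁ x * φ₂ x) = ∫ ω, φ₁ ω * φ₂ ω ∂σ)) ∧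
    ((∀ φ ∈ H, ∑ x ∈ X, W x * φ x = ∫ ω, φ ω ∂σ) →
      (∀ φ ∈ H', (∀ᵐ ω ∂σ, φ ω = 0) → φ = 0) →
      Module.finrank ℝ H' ≤ X.card) :=
  cubature_iff_isometry_and_card_lower_bound_general σ H' H hL2 hH X W
end

section
/- Let n ≥ 2 and k ≥ 0 be integers, ρ > 0, let X be a nonempty finite subset of the sphere ρ𝕊^{n-1} of radius ρ centred at the origin of ℝⁿ, and let W : X → ℝ_{>0} satisfy ∑_{x∈X} W(x) = 1. Then the following are equivalent: (i) ∑_{x∈X} W(x)φ(x) = ∫_{ρ𝕊^{n-1}} φ dσ for every polynomial function φ : ℝⁿ → ℝ of degree at most k; (ii) for every even integer 2l with 0 ≤ 2l ≤ k one has ∑_{x∈X} W(x)⟨x,u⟩^{2l} = c_{2l}·ρ^{2l}·⟨u,u⟩^{l} for all u ∈ ℝⁿ, and for every odd integer 2l'+1 with 2l'+1 ≤ k one has ∑_{x∈X} W(x)⟨x,u⟩^{2l'+1} = 0 for all u ∈ ℝⁿ; here c₀ = 1 and, for l > 0, c_{2l} = (1·3·5⋯(2l−1))/(n(n+2)(n+4)⋯(n+2l−2)).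 -/
open MeasureTheory Finset
open scoped RealInnerProductSpace


private lemma cube_key_sum {R : Type*} [CommRing R] {ι : Type*} [Fintype ι] [DecidableEq ι]
    (T : Finset ι) :
    ∑ S ∈ (Finset.univ : Finset ι).powerset.filter (fun S => T ⊆ S),
        (-1 : R) ^ (Fintype.card ι - S.card) = if T = univ then 1 else 0 := by
  have h1 : ∑ S ∈ (Finset.univ : Finset ι).powerset.filter (fun S => T ⊆ S),
      (-1 : R) ^ (Fintype.card ι - S.card) = ∑ U ∈ Tᶜ.powerset, (-1 : R) ^ U.card := by
    refine Finset.sum_nbij' (fun S => Sᶜ) (fun U => Uᶜ) ?_ ?_ ?_ ?_ ?_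
    · intro S hS
      simp only [mem_filter, mem_powerset] at hS
      simpa [Finset.mem_powerset] using Finset.compl_subset_compl.2 hS.2
    · intro U hU
      simp only [Finset.mem_powerset] at hU
      simp only [mem_filter, mem_powerset]
      exact ⟨Finset.subset_univ _, by simpa using Finset.compl_subset_compl.2 hU⟩
    · intro S _; simp
    · intro U _; simp
    · intro S _; rw [Finset.card_compl]
  rw [h1]
  have h2 : ∑ U ∈ Tᶜ.powerset, (-1 : R) ^ U.card
      = ((∑ U ∈ Tᶜ.powerset, (-1 : ℤ) ^ U.card : ℤ) : R) := by push_cast; rfl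
  rw [h2, Finset.sum_powerset_neg_one_pow_card]
  by_cases h : T = univ
  · simp [h]
  · have : Tᶜ ≠ ∅ := by
      simp only [ne_eq, Finset.compl_eq_empty_iff]
      exact h
    simp [h, this]

private lemma cube_polarization {R : Type*} [CommRing R] {ι : Type*} [Fintype ι] [DecidableEq ι]
    (a : ι → R) :
    (Nat.factorial (Fintype.card ι) : R) * ∏ j, a j =
      ∑ S ∈ (Finset.univ : Finset ι).powerset,
        (-1 : R) ^ (Fintype.card ι - S.card) * (∑ j ∈ S, a j) ^ (Fintype.card ι) := by
  classical
  set m := Fintype.card ι with hm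
  have hpow : ∀ S : Finset ι, (∑ j ∈ S, a j) ^ m
      = ∑ g ∈ Fintype.piFinset (fun _ : ι => S), ∏ i, a (g i) := by
    intro S
    have : (∑ j ∈ S, a j) ^ m = ∏ _i : ι, (∑ j ∈ S, a j) := by
      rw [Finset.prod_const, Finset.card_univ]
    rw [this, Finset.prod_univ_sum]
  have hcard : ((univ : Finset (ι → ι)).filter (fun g => Function.Bijective g)).card
      = Nat.factorial m := by
    rw [← Fintype.card_perm (α := ι)]
    refine Finset.card_bij' (fun g hg => Equiv.ofBijective g (Finset.mem_filter.1 hg).2)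
      (fun e _ => ⇑e) ?_ ?_ ?_ ?_
    · intro g hg; exact Finset.mem_univ _
    · intro e _; exact Finset.mem_filter.2 ⟨Finset.mem_univ _, e.bijective⟩
    · intro g hg; rfl
    · intro e _; ext x; rfl
  symm
  calc
    ∑ S ∈ (Finset.univ : Finset ι).powerset, (-1 : R) ^ (m - S.card) * (∑ j ∈ S, a j) ^ m
      = ∑ S ∈ (Finset.univ : Finset ι).powerset, ∑ g ∈ (Finset.univ : Finset (ι → ι)),
          if Finset.image g univ ⊆ S then (-1 : R) ^ (m - S.card) * ∏ i, a (g i) else 0 := by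
        refine Finset.sum_congr rfl fun S _ => ?_
        have hpi : Fintype.piFinset (fun _ : ι => S)
            = univ.filter (fun g : ι → ι => Finset.image g univ ⊆ S) := by
          ext g
          simp [Fintype.mem_piFinset, Finset.image_subset_iff]
        rw [hpow, Finset.mul_sum, hpi, Finset.sum_filter]
    _ = ∑ g ∈ (Finset.univ : Finset (ι → ι)), (∏ i, a (g i)) *
          ∑ S ∈ (Finset.univ : Finset ι).powerset.filter
            (fun S => Finset.image g univ ⊆ S), (-1 : R) ^ (m - S.card) := by
        rw [Finset.sum_comm]
        refine Finset.sum_congr rfl fun g _ => ?_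
        rw [Finset.sum_filter, Finset.mul_sum]
        refine Finset.sum_congr rfl fun S _ => ?_
        split_ifs <;> ring
    _ = ∑ g ∈ (Finset.univ : Finset (ι → ι)), (∏ i, a (g i)) *
          (if Finset.image g univ = univ then 1 else 0) := by
        refine Finset.sum_congr rfl fun g _ => ?_
        rw [cube_key_sum]
    _ = ∑ g ∈ (Finset.univ : Finset (ι → ι)).filter (fun g => Function.Bijective g),
          ∏ i, a (g i) := by
        rw [Finset.sum_filter]
        refine Finset.sum_congr rfl fun g _ => ?_
        have himg : Finset.image g univ = univ ↔ Function.Bijective g := by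
          rw [← Finite.surjective_iff_bijective]
          constructor
          · intro h y
            have : y ∈ Finset.image g univ := by rw [h]; exact mem_univ y
            obtain ⟨x, _, hx⟩ := Finset.mem_image.1 this
            exact ⟨x, hx⟩
          · intro h
            apply Finset.eq_univ_of_forall
            intro y
            obtain ⟨x, hx⟩ := h y
            exact Finset.mem_image.2 ⟨x, mem_univ x, hx⟩
        rw [if_congr himg rfl rfl]
        split_ifs <;> simp
    _ = ∑ g ∈ (Finset.univ : Finset (ι → ι)).filter (fun g => Function.Bijective g),
          ∏ j, a j := by
        refine Finset.sum_congr rfl fun g hg => ?_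
        exact Fintype.prod_bijective g (Finset.mem_filter.1 hg).2 _ _ (fun x => rfl)
    _ = (Nat.factorial m : R) * ∏ j, a j := by
        rw [Finset.sum_const, hcard, nsmul_eq_mul]

section cubeAux
set_option linter.unusedSectionVars false
set_option linter.unusedVariables false
variable {n : ℕ} {σ : Measure (EuclideanSpace ℝ (Fin n))} [IsProbabilityMeasure σ] {ρ : ℝ}
set_option linter.unusedSectionVars false
variable {n : ℕ} {σ : Measure (EuclideanSpace ℝ (Fin n))} [IsProbabilityMeasure σ] {ρ : ℝ}

private lemma cube_ae_sphere (hsupp : σ (Metric.sphere (0 : EuclideanSpace ℝ (Fin n)) ρ)ᶜ = 0) :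
    ∀ᵐ ω ∂σ, ‖ω‖ = ρ := by
  rw [MeasureTheory.ae_iff]
  refine measure_mono_null ?_ hsupp
  intro ω hω
  simp only [Set.mem_setOf_eq] at hω
  simp only [Set.mem_compl_iff, Metric.mem_sphere, dist_zero_right]
  exact hω

private lemma cube_integrable (hsupp : σ (Metric.sphere (0 : EuclideanSpace ℝ (Fin n)) ρ)ᶜ = 0)
    {f : EuclideanSpace ℝ (Fin n) → ℝ} (hf : Continuous f) : Integrable f σ := by
  obtain ⟨C, hC⟩ := (isCompact_sphere (0 : EuclideanSpace ℝ (Fin n)) ρ).exists_bound_of_continuousOn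
    hf.continuousOn
  refine Integrable.mono' (integrable_const C) hf.aestronglyMeasurable ?_
  filter_upwards [cube_ae_sphere hsupp] with ω hω
  exact hC ω (by simpa [Metric.mem_sphere, dist_zero_right] using hω)

private lemma cube_integral_comp
    (hinv : ∀ g : EuclideanSpace ℝ (Fin n) ≃ₗᵢ[ℝ] EuclideanSpace ℝ (Fin n),
      MeasurePreserving g σ σ)
    (g : EuclideanSpace ℝ (Fin n) ≃ₗᵢ[ℝ] EuclideanSpace ℝ (Fin n))
    (f : EuclideanSpace ℝ (Fin n) → ℝ) :
    ∫ ω, f (g ω) ∂σ = ∫ ω, f ω ∂σ :=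
  (hinv g).integral_comp g.toHomeomorph.measurableEmbedding f

private lemma cube_odd_integral
    (hinv : ∀ g : EuclideanSpace ℝ (Fin n) ≃ₗᵢ[ℝ] EuclideanSpace ℝ (Fin n),
      MeasurePreserving g σ σ)
    {m : ℕ} (hm : Odd m) (u : EuclideanSpace ℝ (Fin n)) :
    ∫ ω, ⟪ω, u⟫ ^ m ∂σ = 0 := by
  have h := cube_integral_comp hinv (LinearIsometryEquiv.neg ℝ) (fun ω => ⟪ω, u⟫ ^ m)
  have h2 : ∀ ω : EuclideanSpace ℝ (Fin n),
      ⟪(LinearIsometryEquiv.neg ℝ) ω, u⟫ ^ m = -(⟪ω, u⟫ ^ m) := by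
    intro ω
    have : ((LinearIsometryEquiv.neg ℝ) ω : EuclideanSpace ℝ (Fin n)) = -ω := rfl
    rw [this, inner_neg_left, hm.neg_pow]
  simp_rw [h2, integral_neg] at h
  linarith

private lemma cube_F_iso
    (hinv : ∀ g : EuclideanSpace ℝ (Fin n) ≃ₗᵢ[ℝ] EuclideanSpace ℝ (Fin n),
      MeasurePreserving g σ σ)
    (m : ℕ) (g : EuclideanSpace ℝ (Fin n) ≃ₗᵢ[ℝ] EuclideanSpace ℝ (Fin n))
    (v : EuclideanSpace ℝ (Fin n)) :
    ∫ ω, ⟪ω, g v⟫ ^ m ∂σ = ∫ ω, ⟪ω, v⟫ ^ m ∂σ := by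
  have h1 : ∀ ω : EuclideanSpace ℝ (Fin n), ⟪ω, g v⟫ = ⟪g.symm ω, v⟫ := by
    intro ω
    conv_lhs => rw [← g.apply_symm_apply ω]
    rw [g.inner_map_map]
  simp_rw [h1]
  exact (hinv g.symm).integral_comp g.symm.toHomeomorph.measurableEmbedding
    (fun ω => ⟪ω, v⟫ ^ m)

private lemma cube_F_norm [NeZero n]
    (hinv : ∀ g : EuclideanSpace ℝ (Fin n) ≃ₗᵢ[ℝ] EuclideanSpace ℝ (Fin n),
      MeasurePreserving g σ σ)
    (m : ℕ) (u : EuclideanSpace ℝ (Fin n)) :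
    ∫ ω, ⟪ω, u⟫ ^ m ∂σ = ‖u‖ ^ m * ∫ ω, (ω 0) ^ m ∂σ := by
  set e₀ : EuclideanSpace ℝ (Fin n) := EuclideanSpace.single 0 (1 : ℝ) with he₀
  have hnorm : ‖‖u‖ • e₀‖ = ‖u‖ := by
    rw [norm_smul]
    simp [he₀, EuclideanSpace.norm_single]
  obtain ⟨g, hg⟩ : ∃ g : EuclideanSpace ℝ (Fin n) ≃ₗᵢ[ℝ] EuclideanSpace ℝ (Fin n),
      g (‖u‖ • e₀) = u :=
    ⟨Submodule.reflection (ℝ ∙ (‖u‖ • e₀ - u))ᗮ, Submodule.reflection_sub hnorm⟩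
  have h1 := cube_F_iso hinv m g (‖u‖ • e₀)
  rw [hg] at h1
  rw [h1]
  have h2 : ∀ ω : EuclideanSpace ℝ (Fin n), ⟪ω, ‖u‖ • e₀⟫ ^ m = ‖u‖ ^ m * (ω 0) ^ m := by
    intro ω
    rw [real_inner_smul_right, mul_pow]
    congr 2
    have : ⟪ω, e₀⟫ = 1 * (starRingEnd ℝ) (ω 0) := EuclideanSpace.inner_single_right 0 (1:ℝ) ω
    simpa using this
  simp_rw [h2]
  exact integral_const_mul _ _

private lemma cube_cont (i : Fin n) :
    Continuous fun ω : EuclideanSpace ℝ (Fin n) => ω i :=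
  (EuclideanSpace.proj (𝕜 := ℝ) i).continuous

private lemma cube_cont_inner (u : EuclideanSpace ℝ (Fin n)) :
    Continuous fun ω : EuclideanSpace ℝ (Fin n) => ⟪ω, u⟫ := by
  have h : (fun ω : EuclideanSpace ℝ (Fin n) => ⟪ω, u⟫)
      = fun ω => ⟪u, ω⟫ := funext fun ω => real_inner_comm _ _
  rw [h]
  exact (innerSL ℝ u).continuous

private lemma cube_swap [NeZero n]
    (hinv : ∀ g : EuclideanSpace ℝ (Fin n) ≃ₗᵢ[ℝ] EuclideanSpace ℝ (Fin n),
      MeasurePreserving g σ σ)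
    (hn : 1 < n) (j k : ℕ) (i : Fin n) (hi : i ≠ 0) :
    ∫ ω, (ω 0) ^ j * (ω i) ^ k ∂σ
      = ∫ ω, (ω 0) ^ j * (ω (⟨1, hn⟩ : Fin n)) ^ k ∂σ := by
  set I1 : Fin n := ⟨1, hn⟩ with hI1
  have hI10 : I1 ≠ 0 := by simp [hI1, Fin.ext_iff]
  by_cases hcase : i = I1
  · rw [hcase]
  · set g := LinearIsometryEquiv.piLpCongrLeft 2 ℝ ℝ (Equiv.swap I1 i) with hgdef
    have happ : ∀ (ω : EuclideanSpace ℝ (Fin n)) (a : Fin n), g ω a = ω (Equiv.swap I1 i a) := by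
      intro ω a
      rw [hgdef, LinearIsometryEquiv.piLpCongrLeft_apply, Equiv.piCongrLeft'_apply,
        Equiv.symm_swap]
    have key := cube_integral_comp hinv g (fun ω => (ω 0) ^ j * (ω I1) ^ k)
    have h2 : ∀ ω : EuclideanSpace ℝ (Fin n),
        (g ω 0) ^ j * (g ω I1) ^ k = (ω 0) ^ j * (ω i) ^ k := by
      intro ω
      rw [happ, happ, Equiv.swap_apply_left,
        Equiv.swap_apply_of_ne_of_ne (Ne.symm hI10) (Ne.symm hi)]
    simp only [h2] at key
    exact key
private lemma cube_A [NeZero n] (hn : 2 ≤ n) (hρ : 0 < ρ)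
    (hsupp : σ (Metric.sphere (0 : EuclideanSpace ℝ (Fin n)) ρ)ᶜ = 0)
    (hinv : ∀ g : EuclideanSpace ℝ (Fin n) ≃ₗᵢ[ℝ] EuclideanSpace ℝ (Fin n),
      MeasurePreserving g σ σ) (l : ℕ) :
    ∫ ω, (ω 0 : ℝ) ^ (2 * l) ∂σ
      = ρ ^ (2 * l) * ∏ j ∈ Finset.range l, ((2 * (j : ℝ) + 1) / ((n : ℝ) + 2 * j)) := by
  induction l with
  | zero => simp
  | succ l ih =>
    have hn1 : 1 < n := by omega
    set I1 : Fin n := ⟨1, hn1⟩ with hI1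
    have hI10 : I1 ≠ 0 := by simp [hI1, Fin.ext_iff]
    have hInt : ∀ (i : Fin n) (j k : ℕ),
        Integrable (fun ω : EuclideanSpace ℝ (Fin n) => (ω 0) ^ j * (ω i) ^ k) σ := by
      intro i j k
      exact cube_integrable hsupp (((cube_cont 0).pow j).mul ((cube_cont i).pow k))
    set A : ℝ := ∫ ω, (ω 0 : ℝ) ^ (2 * l + 2) ∂σ with hA
    set B : ℝ := ∫ ω, (ω 0 : ℝ) ^ (2 * l) * (ω I1) ^ 2 ∂σ with hB
    -- step 1 : sum rule
    have hsum : ρ ^ 2 * ∫ ω, (ω 0 : ℝ) ^ (2 * l) ∂σ = A + ((n : ℝ) - 1) * B := by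
      have hae : (fun ω : EuclideanSpace ℝ (Fin n) => (ω 0 : ℝ) ^ (2 * l) * ρ ^ 2)
          =ᵐ[σ] fun ω => ∑ i, (ω 0 : ℝ) ^ (2 * l) * (ω i) ^ 2 := by
        filter_upwards [cube_ae_sphere hsupp] with ω hω
        have h2 : ∑ i, (ω i : ℝ) ^ 2 = ρ ^ 2 := by
          have hself : ⟪ω, ω⟫ = ‖ω‖ ^ 2 := real_inner_self_eq_norm_sq ω
          rw [hω] at hself
          rw [← hself, PiLp.inner_apply]
          refine Finset.sum_congr rfl fun i _ => ?_
          simp [RCLike.inner_apply, pow_two]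
        rw [← Finset.mul_sum, h2]
      have h3 : ∫ ω, (ω 0 : ℝ) ^ (2 * l) * ρ ^ 2 ∂σ
          = ∫ ω, ∑ i, (ω 0 : ℝ) ^ (2 * l) * (ω i) ^ 2 ∂σ := integral_congr_ae hae
      rw [integral_mul_const] at h3
      have h4 : ∫ ω, ∑ i, (ω 0 : ℝ) ^ (2 * l) * (ω i) ^ 2 ∂σ
          = ∑ i, ∫ ω, (ω 0 : ℝ) ^ (2 * l) * (ω i) ^ 2 ∂σ :=
        integral_finset_sum _ (fun i _ => hInt i (2 * l) 2)
      have h5 : ∑ i, ∫ ω, (ω 0 : ℝ) ^ (2 * l) * (ω i) ^ 2 ∂σ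
          = A + ((n : ℝ) - 1) * B := by
        rw [← Finset.sum_erase_add _ _ (Finset.mem_univ (0 : Fin n))]
        have h6 : ∫ ω, (ω 0 : ℝ) ^ (2 * l) * (ω 0) ^ 2 ∂σ = A := by
          rw [hA]
          congr 1
          funext ω
          rw [← pow_add]
        have h7 : ∀ i ∈ Finset.univ.erase (0 : Fin n),
            ∫ ω, (ω 0 : ℝ) ^ (2 * l) * (ω i) ^ 2 ∂σ = B := by
          intro i hi
          exact cube_swap hinv hn1 (2 * l) 2 i (Finset.mem_erase.1 hi).1
        rw [Finset.sum_congr rfl h7, Finset.sum_const, h6]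
        have hcard : (Finset.univ.erase (0 : Fin n)).card = n - 1 := by
          rw [Finset.card_erase_of_mem (Finset.mem_univ _), Finset.card_univ, Fintype.card_fin]
        rw [hcard, nsmul_eq_mul]
        have : ((n - 1 : ℕ) : ℝ) = (n : ℝ) - 1 := by
          rw [Nat.cast_sub (by omega), Nat.cast_one]
        rw [this]
        ring
      rw [← h4, ← h3] at h5
      linarith [h5]
    -- step 2 : polynomial identity giving (2l+1) * B = A
    have hB2 : (2 * (l : ℝ) + 1) * B = A := by
      set P : Polynomial ℝ := ∑ j ∈ Finset.range (2 * l + 3),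
        Polynomial.C ((∫ ω, (ω 0 : ℝ) ^ j * (ω I1) ^ (2 * l + 2 - j) ∂σ)
          * ((2 * l + 2).choose j)) * Polynomial.X ^ (2 * l + 2 - j) with hP
      set Q : Polynomial ℝ := ∑ i ∈ Finset.range (l + 2),
        Polynomial.C (((l + 1).choose i : ℝ) * A) * Polynomial.X ^ (2 * i) with hQ
      have heval : ∀ t : ℝ, P.eval t = Q.eval t := by
        intro t
        have hPe : P.eval t = ∫ ω, ((ω 0 : ℝ) + t * ω I1) ^ (2 * l + 2) ∂σ := by
          have hexp : ∀ ω : EuclideanSpace ℝ (Fin n),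
              ((ω 0 : ℝ) + t * ω I1) ^ (2 * l + 2)
                = ∑ j ∈ Finset.range (2 * l + 3),
                    (t ^ (2 * l + 2 - j) * ((2 * l + 2).choose j))
                      * ((ω 0 : ℝ) ^ j * (ω I1) ^ (2 * l + 2 - j)) := by
            intro ω
            rw [add_pow]
            refine Finset.sum_congr rfl fun j _ => ?_
            rw [mul_pow]
            ring
          simp_rw [hexp]
          rw [integral_finset_sum _ (fun j _ => ((hInt I1 j (2 * l + 2 - j)).const_mul _))]
          rw [hP]
          rw [Polynomial.eval_finset_sum]
          refine Finset.sum_congr rfl fun j _ => ?_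
          rw [integral_const_mul]
          simp only [Polynomial.eval_mul, Polynomial.eval_C, Polynomial.eval_pow,
            Polynomial.eval_X]
          ring
        have hQe : Q.eval t = (1 + t ^ 2) ^ (l + 1) * A := by
          have h8 : (1 + t ^ 2) ^ (l + 1) = ∑ i ∈ Finset.range (l + 2),
              ((l + 1).choose i : ℝ) * t ^ (2 * i) := by
            rw [add_comm (1 : ℝ) (t ^ 2), add_pow]
            refine Finset.sum_congr rfl fun i _ => ?_
            rw [← pow_mul]
            ring
          rw [hQ, Polynomial.eval_finset_sum, h8, Finset.sum_mul]
          refine Finset.sum_congr rfl fun i _ => ?_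
          simp only [Polynomial.eval_mul, Polynomial.eval_C, Polynomial.eval_pow,
            Polynomial.eval_X]
          ring
        rw [hPe, hQe]
        -- now use invariance
        set ut : EuclideanSpace ℝ (Fin n) :=
          EuclideanSpace.single 0 (1 : ℝ) + EuclideanSpace.single I1 t with hut
        have hinner : ∀ ω : EuclideanSpace ℝ (Fin n), ⟪ω, ut⟫ = (ω 0 : ℝ) + t * ω I1 := by
          intro ω
          rw [hut, inner_add_right]
          rw [EuclideanSpace.inner_single_right 0 (1:ℝ) ω,
            EuclideanSpace.inner_single_right I1 t ω]
          simp
        have hFn := cube_F_norm hinv (2 * l + 2) ut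
        simp_rw [hinner] at hFn
        rw [hFn, ← hA]
        congr 1
        have hnorm2 : ‖ut‖ ^ 2 = 1 + t ^ 2 := by
          rw [← real_inner_self_eq_norm_sq, hut, real_inner_add_add_self]
          rw [EuclideanSpace.inner_single_left 0 (1 : ℝ), EuclideanSpace.inner_single_left 0 (1:ℝ),
            EuclideanSpace.inner_single_left I1 t]
          simp only [EuclideanSpace.single_apply, starRingEnd_apply, star_trivial]
          rw [if_neg (Ne.symm hI10)]
          norm_num
          ring
        have : ‖ut‖ ^ (2 * l + 2) = (‖ut‖ ^ 2) ^ (l + 1) := by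
          rw [← pow_mul]
          ring_nf
        rw [this, hnorm2]
      have hPQ : P = Q := Polynomial.funext heval
      have hco : P.coeff 2 = Q.coeff 2 := by rw [hPQ]
      have hcP : P.coeff 2 = B * (((2 * l + 2).choose (2 * l) : ℕ) : ℝ) := by
        rw [hP, Polynomial.finset_sum_coeff]
        rw [Finset.sum_eq_single (2 * l)]
        · simp only [Polynomial.coeff_C_mul, Polynomial.coeff_X_pow]
          rw [if_pos (by omega : (2 : ℕ) = 2 * l + 2 - 2 * l)]
          rw [show 2 * l + 2 - 2 * l = 2 from by omega]
          rw [← hB]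
          ring
        · intro j hj hne
          simp only [Polynomial.coeff_C_mul, Polynomial.coeff_X_pow]
          rw [if_neg (by rw [Finset.mem_range] at hj; omega)]
          ring
        · intro h
          exact absurd (Finset.mem_range.2 (by omega)) h
      have hcQ : Q.coeff 2 = ((l : ℝ) + 1) * A := by
        rw [hQ, Polynomial.finset_sum_coeff]
        rw [Finset.sum_eq_single 1]
        · simp only [Polynomial.coeff_C_mul, Polynomial.coeff_X_pow]
          norm_num [Nat.choose_one_right]
        · intro i hi hne
          simp only [Polynomial.coeff_C_mul, Polynomial.coeff_X_pow]
          rw [if_neg (by omega)]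
          ring
        · intro h
          exact absurd (Finset.mem_range.2 (by omega)) h
      have hchoose : (2 * l + 2).choose (2 * l) = (l + 1) * (2 * l + 1) := by
        rw [← Nat.choose_symm (by omega : 2 * l ≤ 2 * l + 2),
          show 2 * l + 2 - 2 * l = 2 from by omega, Nat.choose_two_right,
          show 2 * l + 2 - 1 = 2 * l + 1 from by omega,
          show (2 * l + 2) * (2 * l + 1) = 2 * ((l + 1) * (2 * l + 1)) from by ring]
        exact Nat.mul_div_cancel_left _ (by norm_num)
      rw [hcP, hcQ, hchoose] at hco
      push_cast at hco
      have hl1 : ((l : ℝ) + 1) ≠ 0 := by positivity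
      apply mul_left_cancel₀ hl1
      rw [← hco]
      ring
    -- step 3 : combine
    rw [ih] at hsum
    have h2l : (2 * (l : ℝ) + 1) ≠ 0 := by positivity
    have hn2l : ((n : ℝ) + 2 * l) ≠ 0 := by
      have h2n : (2 : ℝ) ≤ (n : ℝ) := by exact_mod_cast hn
      positivity
    have key : A * ((n : ℝ) + 2 * l)
        = (2 * (l : ℝ) + 1) * (ρ ^ 2 * (ρ ^ (2 * l)
            * ∏ j ∈ Finset.range l, ((2 * (j : ℝ) + 1) / ((n : ℝ) + 2 * j)))) := by
      linear_combination (-(2 * (l : ℝ) + 1)) * hsum + (-((n : ℝ) - 1)) * hB2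
    rw [show 2 * (l + 1) = 2 * l + 2 from by omega, ← hA, Finset.prod_range_succ]
    refine mul_right_cancel₀ hn2l ?_
    rw [key]
    field_simp
    ring
end cubeAux

/-- characterization of cubature formulas of strength `k` on the sphere of
radius `ρ` in `ℝⁿ` in terms of the moment identities `(iv)_a` and `(iv)_b`, with the
explicit constants `c_{2l} = (1·3⋯(2l−1))/(n(n+2)⋯(n+2l−2))`. -/
theorem cubature_on_sphere_iff_moment_identities
    (n k : ℕ) (hn : 2 ≤ n) (ρ : ℝ) (hρ : 0 < ρ)
    (σ : Measure (EuclideanSpace ℝ (Fin n))) [IsProbabilityMeasure σ]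
    (hsupp : σ (Metric.sphere (0 : EuclideanSpace ℝ (Fin n)) ρ)ᶜ = 0)
    (hinv : ∀ g : EuclideanSpace ℝ (Fin n) ≃ₗᵢ[ℝ] EuclideanSpace ℝ (Fin n),
      MeasurePreserving g σ σ)
    (X : Finset (EuclideanSpace ℝ (Fin n))) (hX : X.Nonempty)
    (hXs : ∀ x ∈ X, x ∈ Metric.sphere (0 : EuclideanSpace ℝ (Fin n)) ρ)
    (W : EuclideanSpace ℝ (Fin n) → ℝ) (hW : ∀ x ∈ X, 0 < W x)
    (hW1 : ∑ x ∈ X, W x = 1) :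
    (∀ p : MvPolynomial (Fin n) ℝ, p.totalDegree ≤ k →
        ∑ x ∈ X, W x * MvPolynomial.eval (fun i => x i) p
          = ∫ ω, MvPolynomial.eval (fun i => ω i) p ∂σ) ↔
    ((∀ l : ℕ, 2 * l ≤ k → ∀ u : EuclideanSpace ℝ (Fin n),
        ∑ x ∈ X, W x * ⟪x, u⟫ ^ (2 * l)
          = (∏ j ∈ Finset.range l, ((2 * (j : ℝ) + 1) / ((n : ℝ) + 2 * j)))
              * ρ ^ (2 * l) * ⟪u, u⟫ ^ l) ∧
     (∀ l' : ℕ, 2 * l' + 1 ≤ k → ∀ u : EuclideanSpace ℝ (Fin n),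
        ∑ x ∈ X, W x * ⟪x, u⟫ ^ (2 * l' + 1) = 0)) := by
  haveI : NeZero n := ⟨by omega⟩
  classical
  -- claim A even
  have claimA : ∀ (l : ℕ) (u : EuclideanSpace ℝ (Fin n)),
      ∫ ω, ⟪ω, u⟫ ^ (2 * l) ∂σ
        = (∏ j ∈ Finset.range l, ((2 * (j : ℝ) + 1) / ((n : ℝ) + 2 * j)))
            * ρ ^ (2 * l) * ⟪u, u⟫ ^ l := by
    intro l u
    rw [cube_F_norm hinv (2 * l) u, cube_A hn hρ hsupp hinv l]
    have h1 : ‖u‖ ^ (2 * l) = ⟪u, u⟫ ^ l := by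
      rw [pow_mul, real_inner_self_eq_norm_sq]
    rw [h1]
    ring
  -- evaluation of powers of linear forms
  have evalp : ∀ (u x : EuclideanSpace ℝ (Fin n)) (m : ℕ),
      MvPolynomial.eval (fun i => x i)
          ((∑ i, MvPolynomial.C (u i) * MvPolynomial.X i) ^ m) = ⟪x, u⟫ ^ m := by
    intro u x m
    rw [map_pow]
    congr 1
    rw [map_sum, PiLp.inner_apply]
    refine Finset.sum_congr rfl fun i _ => ?_
    simp [RCLike.inner_apply, mul_comm]
  have degp : ∀ (u : EuclideanSpace ℝ (Fin n)) (m : ℕ),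
      ((∑ i, MvPolynomial.C (u i) * MvPolynomial.X i) ^ m).totalDegree ≤ m := by
    intro u m
    refine le_trans (MvPolynomial.totalDegree_pow _ m) ?_
    have h1 : (∑ i, MvPolynomial.C (u i) * MvPolynomial.X i :
        MvPolynomial (Fin n) ℝ).totalDegree ≤ 1 := by
      refine le_trans (MvPolynomial.totalDegree_finset_sum _ _) ?_
      refine Finset.sup_le fun i _ => ?_
      refine le_trans (MvPolynomial.totalDegree_mul _ _) ?_
      simp [MvPolynomial.totalDegree_C, MvPolynomial.totalDegree_X]
    calc m * (∑ i, MvPolynomial.C (u i) * MvPolynomial.X i :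
        MvPolynomial (Fin n) ℝ).totalDegree ≤ m * 1 := Nat.mul_le_mul_left m h1
    _ = m := by omega
  constructor
  · intro h
    constructor
    · intro l hl u
      have h1 := h ((∑ i, MvPolynomial.C (u i) * MvPolynomial.X i) ^ (2 * l))
        (le_trans (degp u (2 * l)) hl)
      simp_rw [evalp] at h1
      rw [h1, claimA]
    · intro l' hl' u
      have h1 := h ((∑ i, MvPolynomial.C (u i) * MvPolynomial.X i) ^ (2 * l' + 1))
        (le_trans (degp u (2 * l' + 1)) hl')
      simp_rw [evalp] at h1
      rw [h1, cube_odd_integral hinv ⟨l', rfl⟩ u]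
  · rintro ⟨he, ho⟩ p hp
    have ME : ∀ m, m ≤ k → ∀ u : EuclideanSpace ℝ (Fin n),
        ∑ x ∈ X, W x * ⟪x, u⟫ ^ m = ∫ ω, ⟪ω, u⟫ ^ m ∂σ := by
      intro m hm u
      rcases Nat.even_or_odd m with hme | hmo
      · obtain ⟨c, hc⟩ := hme
        have hc2 : m = 2 * c := by omega
        subst hc2
        rw [he c hm u, claimA]
      · obtain ⟨c, hc⟩ := hmo
        subst hc
        rw [ho c hm u, cube_odd_integral hinv ⟨c, rfl⟩ u]
    -- monomial case
    have hmono : ∀ d : Fin n →₀ ℕ, (d.sum fun _ e => e) ≤ k →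
        ∑ x ∈ X, W x * (∏ i, (x i : ℝ) ^ d i) = ∫ ω, ∏ i, (ω i : ℝ) ^ d i ∂σ := by
      intro d hd
      set m := d.sum fun _ e => e with hm
      have hcard : Fintype.card ((i : Fin n) × Fin (d i)) = m := by
        rw [Fintype.card_sigma, hm, Finsupp.sum_fintype _ _ (fun i => rfl)]
        simp
      have hprod : ∀ x : EuclideanSpace ℝ (Fin n),
          (∏ j : (i : Fin n) × Fin (d i), (x j.1 : ℝ)) = ∏ i, (x i) ^ d i := by
        intro x
        rw [← Finset.univ_sigma_univ, Finset.prod_sigma]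
        exact Finset.prod_congr rfl fun i _ => by
          simp [Finset.prod_const, Finset.card_univ]
      set uS : Finset ((i : Fin n) × Fin (d i)) → EuclideanSpace ℝ (Fin n) :=
        fun S => ∑ j ∈ S, EuclideanSpace.single j.1 (1 : ℝ) with huS
      have hinnerS : ∀ (S : Finset ((i : Fin n) × Fin (d i))) (x : EuclideanSpace ℝ (Fin n)),
          ⟪x, uS S⟫ = ∑ j ∈ S, x j.1 := by
        intro S x
        rw [huS, inner_sum]
        refine Finset.sum_congr rfl fun j _ => ?_
        have := EuclideanSpace.inner_single_right (𝕜 := ℝ) j.1 (1 : ℝ) x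
        simpa using this
      have hpolar : ∀ x : EuclideanSpace ℝ (Fin n),
          ((m.factorial : ℝ)) * ∏ i, (x i) ^ d i
            = ∑ S ∈ (Finset.univ : Finset ((i : Fin n) × Fin (d i))).powerset,
                (-1 : ℝ) ^ (m - S.card) * ⟪x, uS S⟫ ^ m := by
        intro x
        have h0 := cube_polarization (fun j : (i : Fin n) × Fin (d i) => (x j.1 : ℝ))
        rw [hcard, hprod] at h0
        rw [h0]
        exact Finset.sum_congr rfl fun S _ => by rw [hinnerS]
      have hfact : ((m.factorial : ℝ)) ≠ 0 := by
        exact_mod_cast Nat.factorial_ne_zero m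
      apply mul_left_cancel₀ hfact
      calc (m.factorial : ℝ) * ∑ x ∈ X, W x * ∏ i, (x i) ^ d i
          = ∑ x ∈ X, W x * ((m.factorial : ℝ) * ∏ i, (x i) ^ d i) := by
            rw [Finset.mul_sum]; exact Finset.sum_congr rfl fun x _ => by ring
        _ = ∑ x ∈ X, W x * ∑ S ∈ (Finset.univ :
              Finset ((i : Fin n) × Fin (d i))).powerset,
                (-1 : ℝ) ^ (m - S.card) * ⟪x, uS S⟫ ^ m := by
            exact Finset.sum_congr rfl fun x _ => by rw [hpolar]
        _ = ∑ S ∈ (Finset.univ : Finset ((i : Fin n) × Fin (d i))).powerset,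
              (-1 : ℝ) ^ (m - S.card) * ∑ x ∈ X, W x * ⟪x, uS S⟫ ^ m := by
            simp_rw [Finset.mul_sum]
            rw [Finset.sum_comm]
            refine Finset.sum_congr rfl fun S _ => ?_
            exact Finset.sum_congr rfl fun x _ => by ring
        _ = ∑ S ∈ (Finset.univ : Finset ((i : Fin n) × Fin (d i))).powerset,
              (-1 : ℝ) ^ (m - S.card) * ∫ ω, ⟪ω, uS S⟫ ^ m ∂σ := by
            exact Finset.sum_congr rfl fun S _ => by rw [ME m hd (uS S)]
        _ = ∫ ω, ∑ S ∈ (Finset.univ : Finset ((i : Fin n) × Fin (d i))).powerset,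
              (-1 : ℝ) ^ (m - S.card) * ⟪ω, uS S⟫ ^ m ∂σ := by
            rw [integral_finset_sum]
            · exact Finset.sum_congr rfl fun S _ => by rw [integral_const_mul]
            · intro S _
              exact (cube_integrable hsupp ((cube_cont_inner (uS S)).pow m)).const_mul _
        _ = ∫ ω, (m.factorial : ℝ) * ∏ i, (ω i) ^ d i ∂σ := by
            congr 1
            funext ω
            rw [← hpolar ω]
        _ = (m.factorial : ℝ) * ∫ ω, ∏ i, (ω i) ^ d i ∂σ := integral_const_mul _ _
    -- assemble general polynomial from monomials
    have hevalp : ∀ x : EuclideanSpace ℝ (Fin n), MvPolynomial.eval (fun i => x i) p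
        = ∑ d ∈ p.support, MvPolynomial.coeff d p * ∏ i, (x i : ℝ) ^ d i := by
      intro x
      conv_lhs => rw [← MvPolynomial.support_sum_monomial_coeff p]
      rw [map_sum]
      refine Finset.sum_congr rfl fun d _ => ?_
      rw [MvPolynomial.eval_monomial]
      congr 1
      exact Finsupp.prod_fintype _ _ (fun i => pow_zero _)
    simp_rw [hevalp]
    calc ∑ x ∈ X, W x * ∑ d ∈ p.support, MvPolynomial.coeff d p * ∏ i, (x i : ℝ) ^ d i
        = ∑ d ∈ p.support, MvPolynomial.coeff d p * ∑ x ∈ X, W x * ∏ i, (x i : ℝ) ^ d i := by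
          simp_rw [Finset.mul_sum]
          rw [Finset.sum_comm]
          refine Finset.sum_congr rfl fun d _ => ?_
          exact Finset.sum_congr rfl fun x _ => by ring
      _ = ∑ d ∈ p.support, MvPolynomial.coeff d p * ∫ ω, ∏ i, (ω i : ℝ) ^ d i ∂σ := by
          refine Finset.sum_congr rfl fun d hd => ?_
          rw [hmono d (le_trans (MvPolynomial.le_totalDegree hd) hp)]
      _ = ∫ ω, ∑ d ∈ p.support, MvPolynomial.coeff d p * ∏ i, (ω i : ℝ) ^ d i ∂σ := by
          rw [integral_finset_sum]
          · exact Finset.sum_congr rfl fun d _ => by rw [integral_const_mul]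
          · intro d _
            refine (cube_integrable hsupp ?_).const_mul _
            exact continuous_finset_prod _ fun i _ => (cube_cont i).pow _
end

section
/- Let (Ω,σ) be a finite measure space with σ(Ω) > 0, let F be a finite-dimensional vector space of real-valued square-integrable functions on Ω containing the constant functions, on which the L²(σ) inner product is positive definite, and let G be the linear span of the products φ₁·φ₂ with φ₁,φ₂ ∈ F. Let Φ be the reproducing kernel of F, and assume the diagonal function ω ↦ Φ(ω,ω) is constant on Ω. If (X,W) is a cubature formula for G with |X| = dim_ℝ F (a tight cubature formula), then the weight is uniform: W(x) = σ(Ω)/|X| for all x ∈ X. -/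
/-!
A cubature formula exact on `F · F` turns `∫ φ²` into `∑ W(x) φ(x)²`, so no nonzero `φ ∈ F`
vanishes on `X`; as `|X| = dim F`, evaluation on `X` is then a bijection `F ≃ ℝ^X`. Testing the
cubature formula on `φₓ · Φ(·, x)`, where `φₓ ∈ F` is the Lagrange function of `x ∈ X`, and using
the reproducing property gives `W(x) Φ(x, x) = φₓ(x) = 1`. Hence `W` is constant when `Φ` is
constant on the diagonal, and the constant is fixed by testing on `1 = 1 · 1`.
-/

open MeasureTheory Finset

namespace Cubature

variable {Ω : Type*} {F : Submodule ℝ (Ω → ℝ)} {X : Finset Ω}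

def evalOn (F : Submodule ℝ (Ω → ℝ)) (X : Finset Ω) : F →ₗ[ℝ] (X → ℝ) :=
  LinearMap.pi fun x => (LinearMap.proj (x : Ω)).comp F.subtype

@[simp]
lemma evalOn_apply (φ : F) (x : X) : evalOn F X φ x = (φ : Ω → ℝ) x := rfl

variable [MeasurableSpace Ω] {σ : Measure Ω} {W : Ω → ℝ}

lemma evalOn_injective (hL2 : ∀ φ ∈ F, MemLp φ 2 σ)
    (hpd : ∀ φ ∈ F, (∀ᵐ ω ∂σ, φ ω = 0) → φ = 0)
    (hcub : ∀ φ ∈ F, ∀ ψ ∈ F, ∑ x ∈ X, W x * (φ x * ψ x) = ∫ ω, φ ω * ψ ω ∂σ) :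
    Function.Injective (evalOn F X) := by
  rw [injective_iff_map_eq_zero]
  rintro ⟨φ, hφ⟩ hzero
  have hvanish : ∀ x ∈ X, φ x = 0 := fun x hx => congrFun hzero ⟨x, hx⟩
  have hnorm : ∫ ω, φ ω ^ 2 ∂σ = 0 := by
    simp_rw [sq, ← hcub φ hφ φ hφ]
    exact sum_eq_zero fun x hx => by simp [hvanish x hx]
  have hsq_ae := (integral_eq_zero_iff_of_nonneg (fun ω => sq_nonneg (φ ω))
    (hL2 φ hφ).integrable_sq).mp hnorm
  exact Subtype.ext <| hpd φ hφ <| hsq_ae.mono fun ω hω => pow_eq_zero_iff two_ne_zero |>.mp hω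

lemma exists_lagrange_of_card_eq_finrank [FiniteDimensional ℝ F]
    (hL2 : ∀ φ ∈ F, MemLp φ 2 σ)
    (hpd : ∀ φ ∈ F, (∀ᵐ ω ∂σ, φ ω = 0) → φ = 0)
    (hcub : ∀ φ ∈ F, ∀ ψ ∈ F, ∑ x ∈ X, W x * (φ x * ψ x) = ∫ ω, φ ω * ψ ω ∂σ)
    (htight : X.card = Module.finrank ℝ F) {x₀ : Ω} (hx₀ : x₀ ∈ X) :
    ∃ φ ∈ F, φ x₀ = 1 ∧ ∀ x ∈ X, x ≠ x₀ → φ x = 0 := by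
  classical
  have hdim : Module.finrank ℝ F = Module.finrank ℝ (X → ℝ) := by simp [htight]
  obtain ⟨φ, hφ⟩ := (LinearMap.injective_iff_surjective_of_finrank_eq_finrank hdim).mp
    (evalOn_injective hL2 hpd hcub) (Pi.single ⟨x₀, hx₀⟩ 1)
  refine ⟨φ, φ.2, ?_, fun x hx hne => ?_⟩
  · rw [← evalOn_apply φ ⟨x₀, hx₀⟩, hφ, Pi.single_eq_same]
  · rw [← evalOn_apply φ ⟨x, hx⟩, hφ, Pi.single_eq_of_ne (by simpa using hne)]

lemma weight_mul_kernel_diag_eq_one {Φ : Ω → Ω → ℝ}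
    (hΦmem : ∀ ω : Ω, (fun ω' => Φ ω' ω) ∈ F)
    (hΦrepr : ∀ φ ∈ F, ∀ ω : Ω, ∫ x, φ x * Φ x ω ∂σ = φ ω)
    (hcub : ∀ φ ∈ F, ∀ ψ ∈ F, ∑ x ∈ X, W x * (φ x * ψ x) = ∫ ω, φ ω * ψ ω ∂σ)
    {x₀ : Ω} (hx₀ : x₀ ∈ X) {φ : Ω → ℝ} (hφ : φ ∈ F)
    (hone : φ x₀ = 1) (hzero : ∀ x ∈ X, x ≠ x₀ → φ x = 0) :
    W x₀ * Φ x₀ x₀ = 1 := by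
  have h := hcub φ hφ _ (hΦmem x₀)
  rwa [hΦrepr φ hφ x₀, hone, sum_eq_single_of_mem x₀ hx₀ fun x hx hne => by
    simp [hzero x hx hne], hone, one_mul] at h

end Cubature

open Cubature in
theorem tight_cubature_has_uniform_weight_general
    {Ω : Type*} [MeasurableSpace Ω] (σ : Measure Ω)
    (F G : Submodule ℝ (Ω → ℝ)) [FiniteDimensional ℝ F]
    (hL2 : ∀ φ ∈ F, MemLp φ 2 σ)
    (hconst : ∀ c : ℝ, (fun _ : Ω => c) ∈ F)
    (hpd : ∀ φ ∈ F, (∀ᵐ ω ∂σ, φ ω = 0) → φ = 0)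
    (hG : G = Submodule.span ℝ {f : Ω → ℝ | ∃ φ₁ ∈ F, ∃ φ₂ ∈ F, f = φ₁ * φ₂})
    (Φ : Ω → Ω → ℝ)
    (hΦmem : ∀ ω : Ω, (fun ω' => Φ ω' ω) ∈ F)
    (hΦrepr : ∀ φ ∈ F, ∀ ω : Ω, ∫ x, φ x * Φ x ω ∂σ = φ ω)
    (hdiag : ∀ ω ω' : Ω, Φ ω ω = Φ ω' ω')
    (X : Finset Ω) (W : Ω → ℝ)
    (hcub : ∀ φ ∈ G, ∑ x ∈ X, W x * φ x = ∫ ω, φ ω ∂σ)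
    (htight : X.card = Module.finrank ℝ F) :
    ∀ x ∈ X, W x = (σ Set.univ).toReal / X.card := by
  have hprod : ∀ φ ∈ F, ∀ ψ ∈ F, ∑ x ∈ X, W x * (φ x * ψ x) = ∫ ω, φ ω * ψ ω ∂σ :=
    fun φ hφ ψ hψ => hcub (φ * ψ) (hG ▸ Submodule.subset_span ⟨φ, hφ, ψ, hψ, rfl⟩)
  have hweight_kernel : ∀ x ∈ X, W x * Φ x x = 1 := fun x hx =>
    let ⟨φ, hφ, hone, hzero⟩ := exists_lagrange_of_card_eq_finrank hL2 hpd hprod htight hx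
    weight_mul_kernel_diag_eq_one hΦmem hΦrepr hprod hx hφ hone hzero
  have hmass : ∑ x ∈ X, W x = (σ Set.univ).toReal := by
    simpa [measureReal_def] using hprod _ (hconst 1) _ (hconst 1)
  intro x hx
  have hweight_eq : ∀ y ∈ X, W y = W x := fun y hy =>
    mul_right_cancel₀ (right_ne_zero_of_mul_eq_one (hweight_kernel x hx))
      (by rw [hdiag x y, hweight_kernel y hy, ← hdiag x y, hweight_kernel x hx])
  rw [← hmass, sum_congr rfl hweight_eq, sum_const, nsmul_eq_mul,
    mul_div_cancel_left₀ _ (Nat.cast_ne_zero.mpr (card_ne_zero_of_mem hx))]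

/-- a tight cubature formula (for the span `G` of products of elements of `F`,
with `|X| = dim F`) has uniform weight `σ(Ω)/|X|`, provided the reproducing kernel of `F`
is constant on the diagonal. -/
theorem tight_cubature_has_uniform_weight
    {Ω : Type*} [MeasurableSpace Ω] (σ : Measure Ω) [IsFiniteMeasure σ]
    (hσ : 0 < σ Set.univ)
    (F G : Submodule ℝ (Ω → ℝ)) [FiniteDimensional ℝ F]
    (hL2 : ∀ φ ∈ F, MemLp φ 2 σ)
    (hconst : ∀ c : ℝ, (fun _ : Ω => c) ∈ F)
    (hpd : ∀ φ ∈ F, (∀ᵐ ω ∂σ, φ ω = 0) → φ = 0)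
    (hG : G = Submodule.span ℝ {f : Ω → ℝ | ∃ φ₁ ∈ F, ∃ φ₂ ∈ F, f = φ₁ * φ₂})
    (Φ : Ω → Ω → ℝ)
    (hΦmem : ∀ ω : Ω, (fun ω' => Φ ω' ω) ∈ F)
    (hΦrepr : ∀ φ ∈ F, ∀ ω : Ω, ∫ x, φ x * Φ x ω ∂σ = φ ω)
    (hdiag : ∀ ω ω' : Ω, Φ ω ω = Φ ω' ω')
    (X : Finset Ω) (W : Ω → ℝ) (hW : ∀ x ∈ X, 0 < W x)
    (hcub : ∀ φ ∈ G, ∑ x ∈ X, W x * φ x = ∫ ω, φ ω ∂σ)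
    (htight : X.card = Module.finrank ℝ F) :
    ∀ x ∈ X, W x = (σ Set.univ).toReal / X.card :=
  tight_cubature_has_uniform_weight_general σ F G hL2 hconst hpd hG Φ hΦmem hΦrepr hdiag X W hcub
    htight
end

section
/- Let n ≥ 2 and l ≥ 0 be integers, let X = Y ⊔ (−Y) be a nonempty antipodal finite subset of 𝕊^{n-1} (so −X = X and Y ∩ (−Y) = ∅), and let W : X → ℝ_{>0} be a symmetric weight (W(−x) = W(x) for all x ∈ X). Then (X,W) is a cubature formula of strength 2l+1 on 𝕊^{n-1} if and only if the restriction map ρ : P^{(l)}(𝕊^{n-1}) → ℓ²(Y,2W), φ ↦ φ|_Y, preserves inner products, i.e. 2∑_{y∈Y} W(y)φ₁(y)φ₂(y) = ∫_{𝕊^{n-1}} φ₁φ₂ dσ for all φ₁,φ₂ ∈ P^{(l)}(𝕊^{n-1}). In particular, if (X,W) is such a cubature formula of strength 2l+1, then |X| ≥ 2·dim_ℝ P^{(l)}(𝕊^{n-1}) = 2·C(n+l−1, n−1). -/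
open MeasureTheory Finset
open scoped RealInnerProductSpace

namespace CubAux

open MvPolynomial

lemma sum_eq_card_toMultiset {α : Type*} (f : α →₀ ℕ) :
    (f.sum fun _ e => e) = Multiset.card (Finsupp.toMultiset f) := by
  rw [Finsupp.card_toMultiset]; rfl

lemma degree_eq_sum {α : Type*} (f : α →₀ ℕ) : f.degree = f.sum fun _ e => e := rfl

lemma exists_split {n : ℕ} (l : ℕ) (d : Fin n →₀ ℕ) (hd : (d.sum fun _ e => e) = 2 * l) :
    ∃ e₁ e₂ : Fin n →₀ ℕ, e₁ + e₂ = d ∧ (e₁.sum fun _ e => e) = l ∧ (e₂.sum fun _ e => e) = l := by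
  classical
  set M := Finsupp.toMultiset d with hM
  have hcard : Multiset.card M = 2 * l := by rw [← sum_eq_card_toMultiset]; exact hd
  set N : Multiset (Fin n) := ((M.toList.take l : List (Fin n)) : Multiset (Fin n)) with hN
  have hcardN : Multiset.card N = l := by
    rw [hN, Multiset.coe_card, List.length_take, Multiset.length_toList, hcard]
    omega
  have hNM : N ≤ M := by
    rw [hN]
    calc (↑(M.toList.take l) : Multiset (Fin n)) ≤ ↑M.toList := by
          rw [Multiset.coe_le]
          exact (List.take_sublist l M.toList).subperm
      _ = M := Multiset.coe_toList M
  set e₁ : Fin n →₀ ℕ := Multiset.toFinsupp N with he₁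
  have he₁d : e₁ ≤ d := by
    have : Multiset.toFinsupp N ≤ Multiset.toFinsupp M :=
      (Finsupp.orderIsoMultiset (ι := Fin n)).symm.monotone hNM
    rwa [hM, Finsupp.toMultiset_toFinsupp] at this
  refine ⟨e₁, d - e₁, add_tsub_cancel_of_le he₁d, ?_, ?_⟩
  · rw [sum_eq_card_toMultiset, he₁, Multiset.toFinsupp_toMultiset, hcardN]
  · have hadd : e₁ + (d - e₁) = d := add_tsub_cancel_of_le he₁d
    have hsum : (e₁.sum fun _ e => e) + ((d - e₁).sum fun _ e => e) = 2 * l := by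
      have := Finsupp.sum_add_index' (M := ℕ) (N := ℕ) (f := e₁) (g := d - e₁)
        (h := fun _ e => e) (fun _ => rfl) (fun _ _ _ => rfl)
      rw [← this, hadd, hd]
    have h1 : (e₁.sum fun _ e => e) = l := by
      rw [sum_eq_card_toMultiset, he₁, Multiset.toFinsupp_toMultiset, hcardN]
    omega

variable {n : ℕ}

local notation "E" => EuclideanSpace ℝ (Fin n)

lemma eval_mul_homog {p : MvPolynomial (Fin n) ℝ} {m : ℕ} (hp : p.IsHomogeneous m)
    (c : ℝ) (g : Fin n → ℝ) :
    MvPolynomial.eval (fun i => c * g i) p = c ^ m * MvPolynomial.eval g p := by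
  rw [eval_eq, eval_eq, Finset.mul_sum]
  refine Finset.sum_congr rfl fun d hd => ?_
  have hdeg : ∑ i ∈ d.support, d i = m := by
    have := hp (mem_support_iff.mp hd)
    rw [← this, Finsupp.weight_apply, Finsupp.sum]
    simp
  calc coeff d p * ∏ i ∈ d.support, (c * g i) ^ d i
      = coeff d p * ((∏ i ∈ d.support, c ^ d i) * ∏ i ∈ d.support, g i ^ d i) := by
        rw [← Finset.prod_mul_distrib]; simp_rw [mul_pow]
    _ = c ^ m * (coeff d p * ∏ i ∈ d.support, g i ^ d i) := by
        rw [Finset.prod_pow_eq_pow_sum, hdeg]; ring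

lemma ev_neg {p : MvPolynomial (Fin n) ℝ} {m : ℕ} (hp : p.IsHomogeneous m) (x : E) :
    MvPolynomial.eval (fun i => (-x : E) i) p
      = (-1 : ℝ) ^ m * MvPolynomial.eval (fun i => x i) p := by
  have h : (fun i => (-x : E) i) = fun i => (-1 : ℝ) * x i := by
    funext i
    show -(x i) = -1 * x i
    ring
  rw [h, eval_mul_homog hp]

lemma continuous_ev (p : MvPolynomial (Fin n) ℝ) :
    Continuous (fun x : E => MvPolynomial.eval (fun i => x i) p) := by
  simp_rw [eval_eq]
  refine continuous_finset_sum _ fun d _ => Continuous.mul continuous_const ?_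
  exact continuous_finset_prod _ fun i _ => ((EuclideanSpace.proj (𝕜 := ℝ) i).continuous).pow _

lemma sum_sq_eval {x : E} (hx : x ∈ Metric.sphere (0 : E) 1) :
    MvPolynomial.eval (fun i => x i) (∑ i, (X i : MvPolynomial (Fin n) ℝ) ^ 2) = 1 := by
  have hnorm : ‖x‖ = 1 := by simpa using hx
  have h1 : (∑ i, x i ^ 2) = 1 := by
    have := EuclideanSpace.norm_eq x
    rw [hnorm] at this
    have := (Real.sqrt_eq_one.mp this.symm)
    simpa [Real.norm_eq_abs, sq_abs] using this
  simpa using h1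

lemma S_homog : (∑ i, (X i : MvPolynomial (Fin n) ℝ) ^ 2).IsHomogeneous 2 :=
  IsHomogeneous.sum _ _ _ fun i _ => isHomogeneous_X_pow i 2

lemma integrable_ev (σ : Measure E) [IsProbabilityMeasure σ]
    (hsupp : σ (Metric.sphere (0 : E) 1)ᶜ = 0) (p : MvPolynomial (Fin n) ℝ) :
    Integrable (fun ω : E => MvPolynomial.eval (fun i => ω i) p) σ := by
  have hc := continuous_ev p
  obtain ⟨C, hC⟩ := (isCompact_sphere (0 : E) 1).exists_bound_of_continuousOn hc.continuousOn
  have hae : ∀ᵐ ω ∂σ, ω ∈ Metric.sphere (0 : E) 1 := by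
    rw [ae_iff]; exact hsupp
  refine Integrable.mono' (integrable_const C) hc.aestronglyMeasurable ?_
  filter_upwards [hae] with ω hω using hC ω hω

lemma ball_pos (σ : Measure E) [IsProbabilityMeasure σ]
    (hsupp : σ (Metric.sphere (0 : E) 1)ᶜ = 0)
    (hinv : ∀ g : E ≃ₗᵢ[ℝ] E, MeasurePreserving g σ σ)
    {z : E} (hz : z ∈ Metric.sphere (0 : E) 1) {r : ℝ} (hr : 0 < r) :
    0 < σ (Metric.ball z r) := by
  by_contra h
  push_neg at h
  have h0 : σ (Metric.ball z r) = 0 := le_antisymm (by simpa using h) zero_le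
  have hball : ∀ w : E, w ∈ Metric.sphere (0 : E) 1 → σ (Metric.ball w r) = 0 := by
    intro w hw
    have hnorm : ‖z‖ = ‖w‖ := by
      simp only [Metric.mem_sphere, dist_zero_right] at hz hw
      rw [hz, hw]
    set g : E ≃ₗᵢ[ℝ] E := Submodule.reflection (Submodule.span ℝ {z - w})ᗮ with hg
    have hgz : g z = w := Submodule.reflection_sub hnorm
    have hpre : (g : E → E) ⁻¹' (Metric.ball w r) = Metric.ball z r := by
      ext x
      simp only [Set.mem_preimage, Metric.mem_ball]
      rw [← hgz, dist_eq_norm, dist_eq_norm, ← map_sub g, g.norm_map]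
    have key := (hinv g).measure_preimage
      (s := Metric.ball w r) measurableSet_ball.nullMeasurableSet
    rw [hpre] at key
    rw [← key, h0]
  obtain ⟨t, ht⟩ := (isCompact_sphere (0 : E) 1).elim_finite_subcover
    (fun w : Metric.sphere (0 : E) 1 => Metric.ball (w : E) r)
    (fun w => Metric.isOpen_ball)
    (fun x hx => Set.mem_iUnion.mpr ⟨⟨x, hx⟩, Metric.mem_ball_self hr⟩)
  have h1 : (1 : ENNReal) ≤ σ (⋃ w ∈ t, Metric.ball (w : E) r) + σ (Metric.sphere (0 : E) 1)ᶜ := by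
    have hsub : (Set.univ : Set E) ⊆ (⋃ w ∈ t, Metric.ball (w : E) r) ∪ (Metric.sphere (0 : E) 1)ᶜ := by
      intro x _
      by_cases hx : x ∈ Metric.sphere (0 : E) 1
      · exact Or.inl (ht hx)
      · exact Or.inr hx
    calc (1 : ENNReal) = σ Set.univ := (measure_univ).symm
      _ ≤ σ ((⋃ w ∈ t, Metric.ball (w : E) r) ∪ (Metric.sphere (0 : E) 1)ᶜ) := measure_mono hsub
      _ ≤ _ := measure_union_le _ _
  rw [hsupp, add_zero] at h1
  have h2 : σ (⋃ w ∈ t, Metric.ball (w : E) r) = 0 := by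
    refine le_antisymm ?_ zero_le
    calc σ (⋃ w ∈ t, Metric.ball (w : E) r) ≤ ∑ w ∈ t, σ (Metric.ball (w : E) r) :=
        measure_biUnion_finset_le t _
      _ = 0 := Finset.sum_eq_zero fun w _ => hball w w.2
  rw [h2] at h1
  simp at h1

lemma eq_zero_of_vanish_sphere (hn : 1 ≤ n) {p : MvPolynomial (Fin n) ℝ} {m : ℕ}
    (hp : p.IsHomogeneous m)
    (hv : ∀ z : E, z ∈ Metric.sphere (0 : E) 1 → MvPolynomial.eval (fun i => z i) p = 0) :
    p = 0 := by
  have i0 : Fin n := ⟨0, hn⟩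
  have hz0 : (EuclideanSpace.single i0 (1:ℝ) : E) ∈ Metric.sphere (0 : E) 1 := by
    simp [EuclideanSpace.norm_single]
  apply MvPolynomial.funext
  intro f
  rw [map_zero]
  set x : E := (WithLp.equiv 2 (Fin n → ℝ)).symm f with hx
  have hfx : ∀ i, f i = x i := fun i => rfl
  by_cases hf0 : x = 0
  · have hf : f = fun _ => 0 := by
      funext i; rw [hfx i, hf0]; rfl
    rw [hf]
    have h0 : (fun _ : Fin n => (0:ℝ)) = fun i => 0 * (EuclideanSpace.single i0 (1:ℝ) : E) i := by
      funext i; rw [zero_mul]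
    rw [h0, eval_mul_homog hp 0 _]
    rcases Nat.eq_zero_or_pos m with hm | hm
    · rw [hm, pow_zero, one_mul]
      exact hv _ hz0
    · rw [zero_pow (Nat.pos_iff_ne_zero.mp hm), zero_mul]
  · have hnx : ‖x‖ ≠ 0 := by simpa using hf0
    set z : E := ‖x‖⁻¹ • x with hz
    have hzs : z ∈ Metric.sphere (0 : E) 1 := by
      simp only [Metric.mem_sphere, dist_zero_right, hz, norm_smul]
      rw [norm_inv, norm_norm, inv_mul_cancel₀ hnx]
    have hkey : MvPolynomial.eval f p = ‖x‖ ^ m * MvPolynomial.eval (fun i => z i) p := by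
      have hcoords : ∀ i, f i = ‖x‖ * z i := by
        intro i
        rw [hfx i, hz]
        have : (‖x‖⁻¹ • x) i = ‖x‖⁻¹ * x i := rfl
        rw [this, ← mul_assoc, mul_inv_cancel₀ hnx, one_mul]
      rw [show f = fun i => ‖x‖ * z i from funext hcoords]
      exact eval_mul_homog hp _ _
    rw [hkey, hv z hzs, mul_zero]

lemma sum_X (Y X : Finset E)
    (hdisj : ∀ y ∈ Y, -y ∉ Y)
    (hX : (X : Set E) = ↑Y ∪ (fun y => -y) '' ↑Y) (F : E → ℝ) :
    ∑ x ∈ X, F x = ∑ y ∈ Y, (F y + F (-y)) := by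
  classical
  have hXf : X = Y ∪ Y.image (fun y => -y) := by
    apply Finset.coe_injective
    rw [Finset.coe_union, Finset.coe_image, hX]
  have hdj : Disjoint Y (Y.image fun y => -y) := by
    rw [Finset.disjoint_left]
    intro a ha hb
    obtain ⟨b, hb', rfl⟩ := Finset.mem_image.mp hb
    exact hdisj b hb' (by simpa using ha)
  rw [hXf, Finset.sum_union hdj,
    Finset.sum_image (fun a _ b _ h => neg_injective h), Finset.sum_add_distrib]

lemma integral_comp_neg (σ : Measure E)
    (hinv : ∀ g : E ≃ₗᵢ[ℝ] E, MeasurePreserving g σ σ) (f : E → ℝ) :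
    ∫ ω, f (-ω) ∂σ = ∫ ω, f ω ∂σ := by
  set g : E ≃ₗᵢ[ℝ] E := LinearIsometryEquiv.neg ℝ with hg
  have := (hinv g).integral_comp (g.toHomeomorph.measurableEmbedding) f
  rw [← this]
  rfl

end CubAux

section MainTheorem
open MvPolynomial CubAux

set_option maxHeartbeats 1000000 in
/-- an antipodal weighted set `(X,W)`, `X = Y ⊔ (−Y)`, is a cubature formula
of strength `2l+1` on the unit sphere iff the restriction map
`P^{(l)}(𝕊^{n-1}) → ℓ²(Y,2W)` preserves inner products; in particular a cubature formula
of strength `2l+1` satisfies `|X| ≥ 2·C(n+l−1,n−1)`. -/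
theorem antipodal_cubature_iff_isometry_and_card_bound
    (n l : ℕ) (hn : 2 ≤ n)
    (σ : Measure (EuclideanSpace ℝ (Fin n))) [IsProbabilityMeasure σ]
    (hsupp : σ (Metric.sphere (0 : EuclideanSpace ℝ (Fin n)) 1)ᶜ = 0)
    (hinv : ∀ g : EuclideanSpace ℝ (Fin n) ≃ₗᵢ[ℝ] EuclideanSpace ℝ (Fin n),
      MeasurePreserving g σ σ)
    (Y X : Finset (EuclideanSpace ℝ (Fin n))) (hY : Y.Nonempty)
    (hYs : ∀ y ∈ Y, y ∈ Metric.sphere (0 : EuclideanSpace ℝ (Fin n)) 1)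
    (hdisj : ∀ y ∈ Y, -y ∉ Y)
    (hX : (X : Set (EuclideanSpace ℝ (Fin n))) = (Y : Set _) ∪ (fun y => -y) '' (Y : Set _))
    (W : EuclideanSpace ℝ (Fin n) → ℝ)
    (hW : ∀ x ∈ X, 0 < W x) (hWsymm : ∀ x ∈ X, W (-x) = W x) :
    ((∀ p : MvPolynomial (Fin n) ℝ, p.totalDegree ≤ 2 * l + 1 →
        ∑ x ∈ X, W x * MvPolynomial.eval (fun i => x i) p
          = ∫ ω, MvPolynomial.eval (fun i => ω i) p ∂σ) ↔
      (∀ p q : MvPolynomial (Fin n) ℝ, p.IsHomogeneous l → q.IsHomogeneous l →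
        2 * ∑ y ∈ Y, W y * (MvPolynomial.eval (fun i => y i) p
            * MvPolynomial.eval (fun i => y i) q)
          = ∫ ω, MvPolynomial.eval (fun i => ω i) p
              * MvPolynomial.eval (fun i => ω i) q ∂σ)) ∧
    ((∀ p : MvPolynomial (Fin n) ℝ, p.totalDegree ≤ 2 * l + 1 →
        ∑ x ∈ X, W x * MvPolynomial.eval (fun i => x i) p
          = ∫ ω, MvPolynomial.eval (fun i => ω i) p ∂σ) →
      2 * Nat.choose (n + l - 1) (n - 1) ≤ X.card) := by
  classical
  have hYX : ∀ y ∈ Y, y ∈ X := by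
    intro y hy
    rw [← Finset.mem_coe, hX]
    exact Or.inl hy
  have hXs : ∀ x ∈ X, x ∈ Metric.sphere (0 : EuclideanSpace ℝ (Fin n)) 1 := by
    intro x hx
    rw [← Finset.mem_coe, hX] at hx
    rcases hx with hx | ⟨y, hy, rfl⟩
    · exact hYs x hx
    · have := hYs y hy
      simp only [Metric.mem_sphere, dist_zero_right] at this ⊢
      rw [norm_neg, this]
  have hae : ∀ᵐ ω ∂σ, ω ∈ Metric.sphere (0 : EuclideanSpace ℝ (Fin n)) 1 := by
    rw [ae_iff]; exact hsupp
  -- sums of even homogeneous polynomials over X reduce to Y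
  have even_sum : ∀ (m : ℕ) (r : MvPolynomial (Fin n) ℝ), r.IsHomogeneous (2 * m) →
      ∑ x ∈ X, W x * MvPolynomial.eval (fun i => x i) r
        = 2 * ∑ y ∈ Y, W y * MvPolynomial.eval (fun i => y i) r := by
    intro m r hr
    rw [CubAux.sum_X Y X hdisj hX (fun x => W x * MvPolynomial.eval (fun i => x i) r),
      Finset.mul_sum]
    refine Finset.sum_congr rfl fun y hy => ?_
    rw [hWsymm y (hYX y hy), ev_neg hr, Even.neg_one_pow (even_two_mul m), one_mul]
    ring
  -- forward direction
  have fwd : (∀ p : MvPolynomial (Fin n) ℝ, p.totalDegree ≤ 2 * l + 1 →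
        ∑ x ∈ X, W x * MvPolynomial.eval (fun i => x i) p
          = ∫ ω, MvPolynomial.eval (fun i => ω i) p ∂σ) →
      (∀ p q : MvPolynomial (Fin n) ℝ, p.IsHomogeneous l → q.IsHomogeneous l →
        2 * ∑ y ∈ Y, W y * (MvPolynomial.eval (fun i => y i) p
            * MvPolynomial.eval (fun i => y i) q)
          = ∫ ω, MvPolynomial.eval (fun i => ω i) p
              * MvPolynomial.eval (fun i => ω i) q ∂σ) := by
    intro hcub p q hp hq
    have hpq : (p * q).IsHomogeneous (2 * l) := by
      have := hp.mul hq
      rwa [← two_mul] at this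
    have hdeg : (p * q).totalDegree ≤ 2 * l + 1 := by
      refine le_trans (totalDegree_mul p q) ?_
      have h1 := hp.totalDegree_le
      have h2 := hq.totalDegree_le
      omega
    have h := hcub (p * q) hdeg
    rw [even_sum l (p * q) hpq] at h
    simp only [map_mul] at h
    exact h
  -- backward direction
  have bwd : (∀ p q : MvPolynomial (Fin n) ℝ, p.IsHomogeneous l → q.IsHomogeneous l →
        2 * ∑ y ∈ Y, W y * (MvPolynomial.eval (fun i => y i) p
            * MvPolynomial.eval (fun i => y i) q)
          = ∫ ω, MvPolynomial.eval (fun i => ω i) p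
              * MvPolynomial.eval (fun i => ω i) q ∂σ) →
      (∀ p : MvPolynomial (Fin n) ℝ, p.totalDegree ≤ 2 * l + 1 →
        ∑ x ∈ X, W x * MvPolynomial.eval (fun i => x i) p
          = ∫ ω, MvPolynomial.eval (fun i => ω i) p ∂σ) := by
    intro hiso
    -- every homogeneous polynomial of degree 2l integrates correctly
    have claim_q : ∀ r : MvPolynomial (Fin n) ℝ, r.IsHomogeneous (2 * l) →
        ∑ x ∈ X, W x * MvPolynomial.eval (fun i => x i) r
          = ∫ ω, MvPolynomial.eval (fun i => ω i) r ∂σ := by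
      intro r hr
      have mono : ∀ e ∈ r.support,
          ∑ x ∈ X, W x * MvPolynomial.eval (fun i => x i) (monomial e (coeff e r))
            = ∫ ω, MvPolynomial.eval (fun i => ω i) (monomial e (coeff e r)) ∂σ := by
        intro e he
        have esum : (e.sum fun _ k => k) = 2 * l := by
          have h2 := hr (mem_support_iff.mp he)
          rw [← h2, Finsupp.weight_apply]
          simp [Finsupp.sum]
        obtain ⟨e₁, e₂, hee, h1, h2⟩ := exists_split l e esum
        have hmm1 : (monomial e₁ (coeff e r)).IsHomogeneous l := isHomogeneous_monomial _ h1
        have hmm2 : (monomial e₂ (1:ℝ)).IsHomogeneous l := isHomogeneous_monomial _ h2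
        have hprod : monomial e₁ (coeff e r) * monomial e₂ (1:ℝ) = monomial e (coeff e r) := by
          rw [monomial_mul, hee, mul_one]
        have hiso12 := hiso (monomial e₁ (coeff e r)) (monomial e₂ 1) hmm1 hmm2
        have hmon2l : (monomial e (coeff e r)).IsHomogeneous (2 * l) :=
          isHomogeneous_monomial _ esum
        calc ∑ x ∈ X, W x * MvPolynomial.eval (fun i => x i) (monomial e (coeff e r))
            = 2 * ∑ y ∈ Y, W y * MvPolynomial.eval (fun i => y i) (monomial e (coeff e r)) :=
              even_sum l _ hmon2l
          _ = 2 * ∑ y ∈ Y, W y * (MvPolynomial.eval (fun i => y i) (monomial e₁ (coeff e r))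
              * MvPolynomial.eval (fun i => y i) (monomial e₂ 1)) := by
              rw [← hprod]; simp only [map_mul]
          _ = ∫ ω, MvPolynomial.eval (fun i => ω i) (monomial e₁ (coeff e r))
              * MvPolynomial.eval (fun i => ω i) (monomial e₂ 1) ∂σ := hiso12
          _ = ∫ ω, MvPolynomial.eval (fun i => ω i) (monomial e (coeff e r)) ∂σ := by
              rw [← hprod]; simp only [map_mul]
      have hrepr : ∀ f : Fin n → ℝ, MvPolynomial.eval f r
          = ∑ e ∈ r.support, MvPolynomial.eval f (monomial e (coeff e r)) := by
        intro f
        conv_lhs => rw [← support_sum_monomial_coeff r]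
        rw [map_sum]
      calc ∑ x ∈ X, W x * MvPolynomial.eval (fun i => x i) r
          = ∑ e ∈ r.support, ∑ x ∈ X, W x * MvPolynomial.eval (fun i => x i)
              (monomial e (coeff e r)) := by
            simp_rw [hrepr, Finset.mul_sum]
            rw [Finset.sum_comm]
        _ = ∑ e ∈ r.support, ∫ ω, MvPolynomial.eval (fun i => ω i)
              (monomial e (coeff e r)) ∂σ := Finset.sum_congr rfl mono
        _ = ∫ ω, ∑ e ∈ r.support, MvPolynomial.eval (fun i => ω i)
              (monomial e (coeff e r)) ∂σ :=
            (integral_finset_sum _ fun e _ => integrable_ev σ hsupp _).symm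
        _ = ∫ ω, MvPolynomial.eval (fun i => ω i) r ∂σ :=
            integral_congr_ae (Filter.Eventually.of_forall fun ω => (hrepr _).symm)
    -- every monomial of degree at most 2l+1 integrates correctly
    have mono_case : ∀ (d : Fin n →₀ ℕ), (d.sum fun _ e => e) ≤ 2 * l + 1 → ∀ c : ℝ,
        ∑ x ∈ X, W x * MvPolynomial.eval (fun i => x i) (monomial d c)
          = ∫ ω, MvPolynomial.eval (fun i => ω i) (monomial d c) ∂σ := by
      intro d hd c
      have hdhom : (monomial d c).IsHomogeneous (d.sum fun _ e => e) :=
        isHomogeneous_monomial _ rfl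
      rcases Nat.even_or_odd (d.sum fun _ e => e) with he | ho
      · -- even case
        obtain ⟨k', hk'⟩ := he
        have hk'l : k' ≤ l := by omega
        set S : MvPolynomial (Fin n) ℝ := ∑ i, (MvPolynomial.X i : MvPolynomial (Fin n) ℝ) ^ 2 with hS
        set q : MvPolynomial (Fin n) ℝ := monomial d c * S ^ (l - k') with hq
        have hqhom : q.IsHomogeneous (2 * l) := by
          have h2 : (S ^ (l - k')).IsHomogeneous (2 * (l - k')) := S_homog.pow (l - k')
          have h3 := hdhom.mul h2
          have h4 : (d.sum fun _ e => e) + 2 * (l - k') = 2 * l := by omega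
          rwa [h4] at h3
        have hqint := claim_q q hqhom
        have hptwise : ∀ x : EuclideanSpace ℝ (Fin n), x ∈ Metric.sphere (0 : EuclideanSpace ℝ (Fin n)) 1 →
            MvPolynomial.eval (fun i => x i) q = MvPolynomial.eval (fun i => x i) (monomial d c) := by
          intro x hx
          rw [hq, map_mul, map_pow, sum_sq_eval hx, one_pow, mul_one]
        calc ∑ x ∈ X, W x * MvPolynomial.eval (fun i => x i) (monomial d c)
            = ∑ x ∈ X, W x * MvPolynomial.eval (fun i => x i) q :=
              Finset.sum_congr rfl fun x hx => by rw [hptwise x (hXs x hx)]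
          _ = ∫ ω, MvPolynomial.eval (fun i => ω i) q ∂σ := hqint
          _ = ∫ ω, MvPolynomial.eval (fun i => ω i) (monomial d c) ∂σ := by
              refine integral_congr_ae ?_
              filter_upwards [hae] with ω hω
              rw [hptwise ω hω]
      · -- odd case
        have hlhs : ∑ x ∈ X, W x * MvPolynomial.eval (fun i => x i) (monomial d c) = 0 := by
          rw [CubAux.sum_X Y X hdisj hX
            (fun x => W x * MvPolynomial.eval (fun i => x i) (monomial d c))]
          refine Finset.sum_eq_zero fun y hy => ?_
          rw [hWsymm y (hYX y hy), ev_neg hdhom, ho.neg_one_pow]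
          ring
        have hrhs : ∫ ω, MvPolynomial.eval (fun i => ω i) (monomial d c) ∂σ = 0 := by
          have h1 := integral_comp_neg σ hinv
            (fun ω => MvPolynomial.eval (fun i => ω i) (monomial d c))
          have h2 : (fun ω : EuclideanSpace ℝ (Fin n) =>
              MvPolynomial.eval (fun i => (-ω : EuclideanSpace ℝ (Fin n)) i) (monomial d c))
              = fun ω => -MvPolynomial.eval (fun i => ω i) (monomial d c) := by
            funext ω
            rw [ev_neg hdhom, ho.neg_one_pow]
            ring
          rw [h2, integral_neg] at h1
          linarith
        rw [hlhs, hrhs]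
    -- general polynomial of degree at most 2l+1
    intro p hdegp
    have hrepr : ∀ f : Fin n → ℝ, MvPolynomial.eval f p
        = ∑ e ∈ p.support, MvPolynomial.eval f (monomial e (coeff e p)) := by
      intro f
      conv_lhs => rw [← support_sum_monomial_coeff p]
      rw [map_sum]
    calc ∑ x ∈ X, W x * MvPolynomial.eval (fun i => x i) p
        = ∑ e ∈ p.support, ∑ x ∈ X, W x * MvPolynomial.eval (fun i => x i)
            (monomial e (coeff e p)) := by
          simp_rw [hrepr, Finset.mul_sum]
          rw [Finset.sum_comm]
      _ = ∑ e ∈ p.support, ∫ ω, MvPolynomial.eval (fun i => ω i)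
            (monomial e (coeff e p)) ∂σ := by
          refine Finset.sum_congr rfl fun e he => ?_
          exact mono_case e (le_trans (le_totalDegree he) hdegp) _
      _ = ∫ ω, ∑ e ∈ p.support, MvPolynomial.eval (fun i => ω i)
            (monomial e (coeff e p)) ∂σ :=
          (integral_finset_sum _ fun e _ => integrable_ev σ hsupp _).symm
      _ = ∫ ω, MvPolynomial.eval (fun i => ω i) p ∂σ :=
          integral_congr_ae (Filter.Eventually.of_forall fun ω => (hrepr _).symm)

  refine ⟨⟨fwd, bwd⟩, ?_⟩
  -- cardinality bound
  intro hcub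
  have hiso := fwd hcub
  have hXf : X = Y ∪ Y.image (fun y => -y) := by
    apply Finset.coe_injective
    rw [Finset.coe_union, Finset.coe_image, hX]
  have hdj : Disjoint Y (Y.image fun y => -y) := by
    rw [Finset.disjoint_left]
    intro a ha hb
    obtain ⟨b, hb', rfl⟩ := Finset.mem_image.mp hb
    exact hdisj b hb' (by simpa using ha)
  have hcard : X.card = 2 * Y.card := by
    rw [hXf, Finset.card_union_of_disjoint hdj,
      Finset.card_image_of_injective _ neg_injective]
    omega
  set v : Sym (Fin n) l → (↥Y → ℝ) := fun s y =>
    MvPolynomial.eval (fun i => (y : EuclideanSpace ℝ (Fin n)) i)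
      (monomial (Multiset.toFinsupp ↑s) (1:ℝ)) with hv
  have hli : LinearIndependent ℝ v := by
    rw [Fintype.linearIndependent_iff]
    intro c hc
    set p : MvPolynomial (Fin n) ℝ :=
      ∑ s : Sym (Fin n) l, monomial (Multiset.toFinsupp ↑s) (c s) with hp
    have hdegs : ∀ s : Sym (Fin n) l,
        ((Multiset.toFinsupp (↑s : Multiset (Fin n))).sum fun _ e => e) = l := by
      intro s
      rw [sum_eq_card_toMultiset, Multiset.toFinsupp_toMultiset]
      exact s.2
    have hphom : p.IsHomogeneous l :=
      IsHomogeneous.sum _ _ _ fun s _ => isHomogeneous_monomial _ (hdegs s)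
    have hvanY : ∀ y (hy : y ∈ Y), MvPolynomial.eval (fun i => y i) p = 0 := by
      intro y hy
      have hcy := congrFun hc ⟨y, hy⟩
      rw [Finset.sum_apply] at hcy
      simp only [Pi.smul_apply, smul_eq_mul, Pi.zero_apply] at hcy
      rw [hp, map_sum]
      rw [← hcy]
      refine Finset.sum_congr rfl fun s _ => ?_
      rw [hv]
      rw [show monomial (Multiset.toFinsupp (↑s : Multiset (Fin n))) (c s)
          = c s • monomial (Multiset.toFinsupp (↑s : Multiset (Fin n))) (1:ℝ) by
        rw [MvPolynomial.smul_monomial, smul_eq_mul, mul_one], MvPolynomial.smul_eval]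
    have hzero : ∫ ω, MvPolynomial.eval (fun i => ω i) p
        * MvPolynomial.eval (fun i => ω i) p ∂σ = 0 := by
      rw [← hiso p p hphom hphom]
      have : ∑ y ∈ Y, W y * (MvPolynomial.eval (fun i => y i) p
          * MvPolynomial.eval (fun i => y i) p) = 0 :=
        Finset.sum_eq_zero fun y hy => by rw [hvanY y hy]; ring
      rw [this, mul_zero]
    have hint : Integrable (fun ω : EuclideanSpace ℝ (Fin n) =>
        MvPolynomial.eval (fun i => ω i) p * MvPolynomial.eval (fun i => ω i) p) σ := by
      have hfeq : (fun ω : EuclideanSpace ℝ (Fin n) =>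
          MvPolynomial.eval (fun i => ω i) p * MvPolynomial.eval (fun i => ω i) p)
          = fun ω => MvPolynomial.eval (fun i => ω i) (p * p) := by
        funext ω; rw [map_mul]
      rw [hfeq]
      exact integrable_ev σ hsupp (p * p)
    have hae0 : (fun ω : EuclideanSpace ℝ (Fin n) =>
        MvPolynomial.eval (fun i => ω i) p * MvPolynomial.eval (fun i => ω i) p)
        =ᵐ[σ] 0 := by
      rw [← integral_eq_zero_iff_of_nonneg (fun ω => mul_self_nonneg _) hint]
      exact hzero
    have hnull : σ {ω : EuclideanSpace ℝ (Fin n) |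
        MvPolynomial.eval (fun i => ω i) p ≠ 0} = 0 := by
      have h1 := ae_iff.mp hae0
      refine measure_mono_null ?_ h1
      intro ω hω
      simp only [Set.mem_setOf_eq, Pi.zero_apply] at hω ⊢
      exact fun h => hω (mul_self_eq_zero.mp h)
    have hvs : ∀ z : EuclideanSpace ℝ (Fin n),
        z ∈ Metric.sphere (0 : EuclideanSpace ℝ (Fin n)) 1 →
        MvPolynomial.eval (fun i => z i) p = 0 := by
      intro z hz
      by_contra hzz
      have hopen : IsOpen {ω : EuclideanSpace ℝ (Fin n) |
          MvPolynomial.eval (fun i => ω i) p ≠ 0} :=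
        (isClosed_singleton.preimage (continuous_ev p)).isOpen_compl
      obtain ⟨ε, hε, hball⟩ := Metric.isOpen_iff.mp hopen z hzz
      have hpos := ball_pos σ hsupp hinv hz hε
      exact absurd (measure_mono_null hball hnull) (ne_of_gt hpos)
    have hp0 : p = 0 := eq_zero_of_vanish_sphere (by omega) hphom hvs
    intro s
    have hcoeff := congrArg
      (MvPolynomial.coeff (Multiset.toFinsupp (↑s : Multiset (Fin n)))) hp0
    rw [hp, MvPolynomial.coeff_sum, MvPolynomial.coeff_zero] at hcoeff
    rw [← hcoeff]
    rw [Finset.sum_eq_single s]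
    · rw [MvPolynomial.coeff_monomial, if_pos rfl]
    · intro s' _ hs'
      rw [MvPolynomial.coeff_monomial, if_neg]
      intro heq
      exact hs' (Sym.coe_injective (Multiset.toFinsupp.injective heq))
    · intro hs
      exact absurd (Finset.mem_univ s) hs
  have hle := hli.fintype_card_le_finrank
  rw [Module.finrank_fintype_fun_eq_card, Fintype.card_coe] at hle
  have hcs : Fintype.card (Sym (Fin n) l) = (n + l - 1).choose l := by
    rw [Sym.card_sym_eq_multichoose, Fintype.card_fin, Nat.multichoose_eq]
  have hchoose : (n + l - 1).choose (n - 1) = (n + l - 1).choose l := by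
    have h1 : l ≤ n + l - 1 := by omega
    have h2 := Nat.choose_symm h1
    rwa [show n + l - 1 - l = n - 1 by omega] at h2
  rw [hcard, hchoose]
  exact Nat.mul_le_mul_left 2 (hcs ▸ hle)



end MainTheorem
end
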